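/- Let α > −1/2, β ∈ ℝ, let w be the normalized pure Fisher–Hartwig weight with parameters α, β, and let (φ_n) be a system of orthonormal polynomials for w. Then for every n ≥ 0, (α + iβ + n + 1)·k_n·φ_{n+1}(0) = (α − iβ + n)·k_{n+1}·φ_n(0); equivalently, r_{n+1}·(α + iβ + n + 1) = r_n·(α − iβ + n). -/

import Mathlib

open Complex Polynomial

noncomputable def uc (θ : ℝ) : ℂ := Complex.exp (θ * Complex.I)

noncomputable def starRev (p : Polynomial ℂ) : Polynomial ℂ :=
  (p.map (starRingEnd ℂ)).reverse

noncomputable def kC (φ : ℕ → Polynomial ℂ) (n : ℕ) : ℂ := (φ n).leadingCoeff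

noncomputable def rC (φ : ℕ → Polynomial ℂ) (n : ℕ) : ℂ := (φ n).coeff 0 / kC φ n

noncomputable def mC (φ : ℕ → Polynomial ℂ) (n : ℕ) : ℂ := kC φ n / kC φ (n+1)

noncomputable def sC (φ : ℕ → Polynomial ℂ) (n : ℕ) : ℂ := rC φ (n+1) / rC φ n

/-- A system of orthonormal polynomials on the unit circle for the weight `w`:
degree of `φ n` is `n`, leading coefficient real and positive, orthonormality. -/
def OPS (w : ℝ → ℂ) (φ : ℕ → Polynomial ℂ) : Prop :=
  (∀ n : ℕ, (φ n).degree = n) ∧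
  (∀ n : ℕ, ∃ c : ℝ, 0 < c ∧ (φ n).leadingCoeff = (c : ℂ)) ∧
  (∀ m n : ℕ, (∫ θ in (0:ℝ)..(2 * Real.pi),
      (φ m).eval (uc θ) * (starRingEnd ℂ) ((φ n).eval (uc θ)) * w θ)
    = if m = n then 1 else 0)

/-- Normalisation constant of the pure Fisher-Hartwig weight. -/
noncomputable def FHC (α β : ℝ) : ℂ :=
  Complex.Gamma (1 + (α : ℂ) + (β : ℂ) * Complex.I) *
    Complex.Gamma (1 + (α : ℂ) - (β : ℂ) * Complex.I) /
    (2 * (Real.pi : ℂ) * Complex.Gamma (1 + 2 * (α : ℂ)))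

/-- The normalized pure Fisher-Hartwig weight on the unit circle. -/
noncomputable def FHw (α β : ℝ) (θ : ℝ) : ℂ :=
  FHC α β * (((2 * Real.sin (θ / 2)) ^ (2 * α) : ℝ) : ℂ) *
    ((Real.exp (-β * (θ - Real.pi)) : ℝ) : ℂ)

/-!
Write `z = e^{iθ}`, `a = α + iβ`, `b = α - iβ` and
`L_j P = (z² - z) P' + ((a + 1 - j) z + (b + j)) P`. On `(0, 2π)` the weight satisfies
`w'/w = iα (z + 1)/(z - 1) - β`, so `P(z) z^{-j} (z - 1) w` is a primitive of
`i L_j P(z) z^{-j} w`; since `2α + 1 > 0` it vanishes at `θ = 0, 2π`, whence `⟨L_j P, z^j⟩ = 0`.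
Because `⟨z p, z q⟩ = ⟨p, q⟩`, taking `P = φ_n` shows that `L_0 φ_n + n φ_n` is orthogonal to
`z^j` for all `j ≤ n`. Its leading term is that of `c φ_{n+1}` with
`c = (a + n + 1) k_n / k_{n+1}`, and the difference, of degree `≤ n` and orthogonal to all
polynomials of degree `≤ n`, vanishes. So `L_0 φ_n + n φ_n = c φ_{n+1}`, and comparing constant
terms gives `(b + n) φ_n(0) = c φ_{n+1}(0)`.
-/

open MeasureTheory Set ComplexConjugate

section OrthonormalPolynomials

open Finset

variable {K : Type*} [Field K]

theorem coeff_eq_leadingCoeff_of_degree_eq {p : K[X]} {n : ℕ} (h : p.degree = n) :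
    p.coeff n = p.leadingCoeff := by
  rw [leadingCoeff, natDegree_eq_of_degree_eq_some h]

theorem leadingCoeff_ne_zero_of_degree_eq {p : K[X]} {n : ℕ} (h : p.degree = n) :
    p.leadingCoeff ≠ 0 :=
  leadingCoeff_ne_zero.2 (ne_zero_of_coe_le_degree h.ge)

theorem coeff_X_mul_derivative (P : K[X]) (m : ℕ) :
    (X * derivative P).coeff m = m * P.coeff m := by
  cases m with
  | zero => simp
  | succ m => rw [coeff_X_mul, coeff_derivative, mul_comm]; push_cast; ring

noncomputable def ladderOp (a b : K) (j : ℕ) (P : K[X]) : K[X] :=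
  (X ^ 2 - X) * derivative P + (C (a + 1 - j) * X + C (b + j)) * P

theorem ladderOp_eq_ladderOp_zero_add (a b : K) (j : ℕ) (P : K[X]) :
    ladderOp a b j P = ladderOp a b 0 P + (j : K) • ((1 - X) * P) := by
  simp only [ladderOp, map_add, map_sub, map_natCast, map_one, smul_eq_C_mul, Nat.cast_zero,
    sub_zero, add_zero]
  ring

theorem coeff_ladderOp_zero (a b : K) (j : ℕ) (P : K[X]) :
    (ladderOp a b j P).coeff 0 = (b + j) * P.coeff 0 := by
  simp [ladderOp, mul_coeff_zero]

theorem coeff_ladderOp_succ (a b : K) (j : ℕ) (P : K[X]) (m : ℕ) :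
    (ladderOp a b j P).coeff (m + 1) =
      (m + a + 1 - j) * P.coeff m + (b + j - (m + 1)) * P.coeff (m + 1) := by
  have hsplit : ladderOp a b j P = X * (X * derivative P) - X * derivative P +
      (C (a + 1 - j) * (X * P) + C (b + j) * P) := by
    rw [ladderOp]; ring
  rw [hsplit, coeff_add, coeff_sub, coeff_add, coeff_X_mul_derivative P (m + 1)]
  simp only [coeff_X_mul, coeff_C_mul, coeff_X_mul_derivative]
  push_cast; ring

variable {φ : ℕ → K[X]}

theorem exists_eq_sum_smul_of_degree_lt (hdeg : ∀ n, (φ n).degree = n) :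
    ∀ {N : ℕ} {p : K[X]}, p.degree < N → ∃ c : ℕ → K, p = ∑ i ∈ range N, c i • φ i
  | 0, p, hp => ⟨0, by simpa [Nat.WithBot.lt_zero_iff, degree_eq_bot] using hp⟩
  | N + 1, p, hp => by
    set a := p.coeff N / (φ N).leadingCoeff
    have hlower : (p - a • φ N).degree < N := by
      refine (degree_lt_iff_coeff_zero _ _).2 fun m hm => ?_
      obtain rfl | hm := hm.eq_or_lt
      · rw [coeff_sub, coeff_smul, coeff_eq_leadingCoeff_of_degree_eq (hdeg N), smul_eq_mul,
          div_mul_cancel₀ _ (leadingCoeff_ne_zero_of_degree_eq (hdeg N)), sub_self]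
      · rw [coeff_sub, coeff_smul, coeff_eq_zero_of_degree_lt (hp.trans_le (by exact_mod_cast hm)),
          coeff_eq_zero_of_degree_lt (p := φ N) (by rw [hdeg]; exact_mod_cast hm), smul_zero,
          sub_zero]
    obtain ⟨c, hc⟩ := exists_eq_sum_smul_of_degree_lt hdeg hlower
    refine ⟨Function.update c N a, ?_⟩
    rw [sum_range_succ, Function.update_self,
      sum_congr rfl fun i hi => by rw [Function.update_of_ne (mem_range.1 hi).ne], ← hc,
      sub_add_cancel]

variable {σ : K →+* K} {B : K[X] →ₗ[K] K[X] →ₛₗ[σ] K}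

theorem form_eq_zero_of_degree_lt (hdeg : ∀ n, (φ n).degree = n)
    (hON : ∀ m n, B (φ m) (φ n) = if m = n then 1 else 0) {n : ℕ} {q : K[X]}
    (hq : q.degree < n) : B (φ n) q = 0 := by
  obtain ⟨c, rfl⟩ := exists_eq_sum_smul_of_degree_lt hdeg hq
  rw [map_sum]
  refine sum_eq_zero fun i hi => ?_
  rw [map_smulₛₗ, hON, if_neg (mem_range.1 hi).ne', smul_zero]

theorem eq_zero_of_form_X_pow_eq_zero (hdeg : ∀ n, (φ n).degree = n)
    (hON : ∀ m n, B (φ m) (φ n) = if m = n then 1 else 0) {N : ℕ} {D : K[X]}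
    (hD : D.degree < N) (h : ∀ j < N, B D (X ^ j) = 0) : D = 0 := by
  have horth : ∀ l < N, B D (φ l) = 0 := by
    intro l hl
    rw [(φ l).as_sum_range' N (by rw [natDegree_eq_of_degree_eq_some (hdeg l)]; exact hl),
      map_sum]
    refine sum_eq_zero fun j hj => ?_
    rw [← smul_X_eq_monomial, map_smulₛₗ, h j (mem_range.1 hj), smul_zero]
  obtain ⟨c, rfl⟩ := exists_eq_sum_smul_of_degree_lt hdeg hD
  refine sum_eq_zero fun i hi => ?_
  have := horth i (mem_range.1 hi)
  simp only [map_sum, map_smul, LinearMap.sum_apply, LinearMap.smul_apply,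
    hON, smul_eq_mul, mul_ite, mul_one, mul_zero, sum_ite_eq', if_pos hi] at this
  rw [this, zero_smul]

theorem form_ladderOp_zero_add_smul_X_pow_eq_zero (hdeg : ∀ n, (φ n).degree = n)
    (hON : ∀ m n, B (φ m) (φ n) = if m = n then 1 else 0)
    (hshift : ∀ p q, B (X * p) (X * q) = B p q)
    {a b : K} (hladder : ∀ j P, B (ladderOp a b j P) (X ^ j) = 0) {n j : ℕ} (hj : j ≤ n) :
    B (ladderOp a b 0 (φ n) + (n : K) • φ n) (X ^ j) = 0 := by
  have horth : ∀ i < n, B (φ n) (X ^ i) = 0 := fun i hi =>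
    form_eq_zero_of_degree_lt hdeg hON (by rw [degree_X_pow]; exact_mod_cast hi)
  have h := hladder j (φ n)
  rw [ladderOp_eq_ladderOp_zero_add, map_add, map_smul, sub_mul, one_mul, map_sub] at h
  have hshifted : (j : K) • B (X * φ n) (X ^ j) = 0 := by
    cases j with
    | zero => simp
    | succ i => rw [pow_succ', hshift, horth i (by omega), smul_zero]
  have hself : ((n : K) - j) * B (φ n) (X ^ j) = 0 := by
    obtain rfl | hj := hj.eq_or_lt
    · simp
    · rw [horth j hj, mul_zero]
  simp only [map_add, map_smul, LinearMap.add_apply, LinearMap.sub_apply, LinearMap.smul_apply,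
    smul_eq_mul] at h hshifted ⊢
  linear_combination h + hshifted + hself

theorem leadingCoeff_mul_coeff_zero_succ_eq_of_ladderOp (hdeg : ∀ n, (φ n).degree = n)
    (hON : ∀ m n, B (φ m) (φ n) = if m = n then 1 else 0)
    (hshift : ∀ p q, B (X * p) (X * q) = B p q)
    {a b : K} (hladder : ∀ j P, B (ladderOp a b j P) (X ^ j) = 0) (n : ℕ) :
    (a + n + 1) * (φ n).leadingCoeff * (φ (n + 1)).coeff 0 =
      (b + n) * (φ (n + 1)).leadingCoeff * (φ n).coeff 0 := by
  have hlead := leadingCoeff_ne_zero_of_degree_eq (hdeg (n + 1))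
  set c := (a + n + 1) * (φ n).leadingCoeff / (φ (n + 1)).leadingCoeff
  have hc : c * (φ (n + 1)).leadingCoeff = (a + n + 1) * (φ n).leadingCoeff :=
    div_mul_cancel₀ _ hlead
  set D := ladderOp a b 0 (φ n) + (n : K) • φ n - c • φ (n + 1)
  have hDorth : ∀ j < n + 1, B D (X ^ j) = 0 := by
    intro j hj
    rw [map_sub, LinearMap.sub_apply,
      form_ladderOp_zero_add_smul_X_pow_eq_zero hdeg hON hshift hladder (by omega), map_smul,
      LinearMap.smul_apply,
      form_eq_zero_of_degree_lt hdeg hON (by rw [degree_X_pow]; exact_mod_cast hj), smul_zero,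
      sub_zero]
  have hDdeg : D.degree < (n + 1 : ℕ) := by
    refine (degree_lt_iff_coeff_zero _ _).2 fun m hm => ?_
    obtain ⟨m, rfl⟩ : ∃ m', m = m' + 1 := ⟨m - 1, by omega⟩
    have hlt : ∀ {k l : ℕ}, k < l → (φ k).coeff l = 0 := fun h =>
      coeff_eq_zero_of_degree_lt (by rw [hdeg]; exact_mod_cast h)
    simp only [D, coeff_sub, coeff_add, coeff_smul, coeff_ladderOp_succ, smul_eq_mul]
    obtain rfl | hm := (Nat.le_of_succ_le_succ hm).eq_or_lt
    · rw [hlt (Nat.lt_succ_self _), coeff_eq_leadingCoeff_of_degree_eq (hdeg _),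
        coeff_eq_leadingCoeff_of_degree_eq (hdeg _), hc]
      ring
    · rw [hlt hm, hlt (by omega), hlt (by omega)]
      ring
  have h0 := congrArg (coeff · 0) (eq_zero_of_form_X_pow_eq_zero hdeg hON hDdeg hDorth)
  simp only [D, coeff_sub, coeff_add, coeff_smul, coeff_ladderOp_zero, coeff_zero, smul_eq_mul,
    Nat.cast_zero, add_zero] at h0
  linear_combination (-(φ (n + 1)).leadingCoeff) * h0 - (φ (n + 1)).coeff 0 * hc

end OrthonormalPolynomials

@[fun_prop]
theorem continuous_uc : Continuous uc := by unfold uc; fun_prop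

theorem uc_mul_conj (θ : ℝ) : uc θ * conj (uc θ) = 1 := by
  rw [mul_conj', uc, norm_exp_ofReal_mul_I]; simp

theorem conj_uc_pow (θ : ℝ) (j : ℕ) : conj (uc θ) ^ j = uc (-j * θ) := by
  unfold uc
  rw [← exp_conj, ← exp_nat_mul]
  simp only [map_mul, conj_ofReal, conj_I]
  push_cast; ring_nf

theorem uc_eq_cexp_half_sq (θ : ℝ) : uc θ = cexp (θ / 2 * I) ^ 2 := by
  rw [uc, ← exp_nat_mul]; ring_nf

theorem hasDerivAt_uc (θ : ℝ) : HasDerivAt uc (I * uc θ) θ := by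
  convert ((hasDerivAt_id (θ : ℂ)).mul_const I).cexp.comp_ofReal using 1
  · funext y; simp [uc, mul_comm]
  · simp [uc, mul_comm]

theorem intervalIntegrable_eval_mul_conj_eval_mul {w : ℝ → ℂ} {a b : ℝ}
    (hw : IntervalIntegrable w volume a b) (p q : ℂ[X]) :
    IntervalIntegrable (fun θ => p.eval (uc θ) * conj (q.eval (uc θ)) * w θ) volume a b :=
  hw.continuousOn_mul (by fun_prop)

noncomputable def circleForm (w : ℝ → ℂ) (hw : IntervalIntegrable w volume 0 (2 * Real.pi)) :
    ℂ[X] →ₗ[ℂ] ℂ[X] →ₗ⋆[ℂ] ℂ :=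
  LinearMap.mk₂'ₛₗ (RingHom.id ℂ) (starRingEnd ℂ)
    (fun p q => ∫ θ in (0 : ℝ)..2 * Real.pi, p.eval (uc θ) * conj (q.eval (uc θ)) * w θ)
    (fun p₁ p₂ q => by
      simp only [eval_add, add_mul]
      exact intervalIntegral.integral_add (intervalIntegrable_eval_mul_conj_eval_mul hw _ _)
        (intervalIntegrable_eval_mul_conj_eval_mul hw _ _))
    (fun c p q => by
      simp only [eval_smul, smul_eq_mul, RingHom.id_apply, ← intervalIntegral.integral_const_mul,
        mul_assoc])
    (fun p q₁ q₂ => by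
      simp only [eval_add, map_add, mul_add, add_mul]
      exact intervalIntegral.integral_add (intervalIntegrable_eval_mul_conj_eval_mul hw _ _)
        (intervalIntegrable_eval_mul_conj_eval_mul hw _ _))
    (fun c p q => by
      simp only [eval_smul, smul_eq_mul, map_mul, ← intervalIntegral.integral_const_mul]
      congr 1; funext θ; ring)

theorem circleForm_apply (w : ℝ → ℂ) (hw : IntervalIntegrable w volume 0 (2 * Real.pi))
    (p q : ℂ[X]) :
    circleForm w hw p q =
      ∫ θ in (0 : ℝ)..2 * Real.pi, p.eval (uc θ) * conj (q.eval (uc θ)) * w θ := rfl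

theorem circleForm_X_mul_X (w : ℝ → ℂ) (hw : IntervalIntegrable w volume 0 (2 * Real.pi))
    (p q : ℂ[X]) : circleForm w hw (X * p) (X * q) = circleForm w hw p q := by
  simp only [circleForm_apply, eval_mul, eval_X, map_mul]
  congr 1; funext θ
  linear_combination (p.eval (uc θ) * conj (q.eval (uc θ)) * w θ) * uc_mul_conj θ

theorem intervalIntegrable_two_mul_sin_half_rpow {r : ℝ} (hr : -1 < r) :
    IntervalIntegrable (fun θ => (2 * Real.sin (θ / 2)) ^ r) volume 0 (2 * Real.pi) := by
  rcases le_or_gt 0 r with hr0 | hr0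
  · exact (Continuous.rpow_const (by fun_prop) fun _ => Or.inr hr0).intervalIntegrable _ _
  have hleft : IntervalIntegrable (fun θ => (2 * Real.sin (θ / 2)) ^ r) volume 0 Real.pi := by
    refine ((intervalIntegral.intervalIntegrable_rpow' hr).const_mul ((2 / Real.pi) ^ r)).mono_fun'
      ((Measurable.pow_const (by fun_prop) r).aestronglyMeasurable) ?_
    rw [Filter.EventuallyLE, ae_restrict_iff' measurableSet_uIoc]
    refine Filter.Eventually.of_forall fun θ hθ => ?_
    rw [uIoc_of_le Real.pi_pos.le] at hθ
    have hjordan : 2 / Real.pi * θ ≤ 2 * Real.sin (θ / 2) := by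
      have := Real.mul_le_sin (x := θ / 2) (by linarith [hθ.1]) (by linarith [hθ.2])
      linarith
    have hpos : 0 < 2 / Real.pi * θ := by have := hθ.1; positivity
    rw [Real.norm_of_nonneg (Real.rpow_nonneg (hpos.le.trans hjordan) _),
      ← Real.mul_rpow (by positivity) hθ.1.le]
    exact Real.rpow_le_rpow_of_nonpos hpos hjordan hr0.le
  have hright := (hleft.comp_sub_left (2 * Real.pi)).symm
  rw [show 2 * Real.pi - Real.pi = Real.pi by ring, sub_zero] at hright
  refine hleft.trans (hright.congr fun θ _ => ?_)
  rw [show (2 * Real.pi - θ) / 2 = Real.pi - θ / 2 by ring, Real.sin_pi_sub]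

section FisherHartwig

variable {α : ℝ} (β : ℝ)

theorem intervalIntegrable_FHw (hα : -(1 / 2 : ℝ) < α) :
    IntervalIntegrable (FHw α β) volume 0 (2 * Real.pi) := by
  have h := intervalIntegrable_two_mul_sin_half_rpow (r := 2 * α) (by linarith)
  exact (IntervalIntegrable.const_mul ⟨h.1.ofReal, h.2.ofReal⟩ _).mul_continuousOn
    (by fun_prop)

/-- `(uc θ - 1) * FHw α β θ` on `(0, 2π)` (see `FHwReg_eq`), written with the exponent
`2α + 1 > 0` so that it is continuous on `ℝ` and vanishes at `0` and `2π`. -/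
noncomputable def FHwReg (α β θ : ℝ) : ℂ :=
  I * FHC α β * cexp (θ / 2 * I) *
    (((2 * Real.sin (θ / 2)) ^ (2 * α + 1) * Real.exp (-β * (θ - Real.pi)) : ℝ) : ℂ)

theorem FHwReg_eq {θ : ℝ} (hθ : Real.sin (θ / 2) ≠ 0) :
    FHwReg α β θ = (uc θ - 1) * FHw α β θ := by
  rw [FHwReg, FHw, Real.rpow_add_one (mul_ne_zero two_ne_zero hθ), uc_eq_cexp_half_sq,
    exp_mul_I]
  generalize (2 * Real.sin (θ / 2)) ^ (2 * α) = W
  generalize Real.exp (-β * (θ - Real.pi)) = E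
  push_cast
  linear_combination (FHC α β * W * E) * (sin (θ / 2) ^ 2 * I_sq - cos_sq_add_sin_sq (θ / 2 : ℂ))

theorem continuous_FHwReg (hα : -(1 / 2 : ℝ) < α) : Continuous (FHwReg α β) := by
  unfold FHwReg
  have : Continuous fun θ : ℝ => (2 * Real.sin (θ / 2)) ^ (2 * α + 1) :=
    Continuous.rpow_const (by fun_prop) fun _ => Or.inr (by linarith)
  fun_prop

theorem FHwReg_zero (hα : -(1 / 2 : ℝ) < α) : FHwReg α β 0 = 0 := by
  simp [FHwReg, Real.zero_rpow (by linarith : 2 * α + 1 ≠ 0)]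

theorem FHwReg_two_pi (hα : -(1 / 2 : ℝ) < α) : FHwReg α β (2 * Real.pi) = 0 := by
  simp [FHwReg, mul_div_cancel_left₀, Real.zero_rpow (by linarith : 2 * α + 1 ≠ 0)]

theorem hasDerivAt_FHwReg {θ : ℝ} (hθ : Real.sin (θ / 2) ≠ 0) :
    HasDerivAt (FHwReg α β)
      ((I * uc θ + α * I * (uc θ + 1) - β * (uc θ - 1)) * FHw α β θ) θ := by
  have hs2 : 2 * Real.sin (θ / 2) ≠ 0 := mul_ne_zero two_ne_zero hθ
  have hu := (((hasDerivAt_id (θ : ℂ)).div_const 2).mul_const I).cexp.comp_ofReal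
  have hsin := ((Real.hasDerivAt_sin _).comp θ ((hasDerivAt_id θ).div_const 2)).const_mul 2
  have hR := hsin.rpow_const (p := 2 * α + 1) (Or.inl hs2)
  have hE := (((hasDerivAt_id θ).sub_const Real.pi).const_mul (-β)).exp
  refine ((hu.const_mul (I * FHC α β)).mul (hR.mul hE).ofReal_comp).congr_deriv ?_
  simp only [id, Function.comp_def, Pi.mul_apply]
  rw [FHw, uc_eq_cexp_half_sq, exp_mul_I, add_sub_cancel_right, Real.rpow_add_one hs2]
  generalize (2 * Real.sin (θ / 2)) ^ (2 * α) = W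
  generalize Real.exp (-β * (θ - Real.pi)) = E
  push_cast
  linear_combination (FHC α β * W * E * (α * I + β)) *
    (cos_sq_add_sin_sq (θ / 2 : ℂ) - sin (θ / 2) ^ 2 * I_sq)

theorem hasDerivAt_ladder_primitive (P : ℂ[X]) (j : ℕ) {θ : ℝ} (hθ : Real.sin (θ / 2) ≠ 0) :
    HasDerivAt (fun t => P.eval (uc t) * uc (-j * t) * FHwReg α β t)
      (I * ((ladderOp (α + β * I) (α - β * I) j P).eval (uc θ) *
        conj ((X ^ j : ℂ[X]).eval (uc θ)) * FHw α β θ)) θ := by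
  have hP := (P.hasDerivAt (uc θ)).comp θ (hasDerivAt_uc θ)
  have hconj := (hasDerivAt_uc (-j * θ)).scomp θ ((hasDerivAt_id' θ).const_mul (-(j : ℝ)))
  refine ((hP.mul hconj).mul (hasDerivAt_FHwReg β hθ)).congr_deriv ?_
  rw [FHwReg_eq β hθ, eval_pow, eval_X, map_pow, conj_uc_pow]
  simp only [ladderOp, Function.comp_def, Pi.mul_apply, real_smul, eval_add, eval_mul, eval_sub,
    eval_pow, eval_X, eval_C]
  push_cast
  linear_combination (β * (1 - uc θ) * uc (-j * θ) * P.eval (uc θ) * FHw α β θ) * I_sq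

theorem circleForm_FHw_ladderOp (hα : -(1 / 2 : ℝ) < α) (j : ℕ) (P : ℂ[X]) :
    circleForm (FHw α β) (intervalIntegrable_FHw β hα)
      (ladderOp (α + β * I) (α - β * I) j P) (X ^ j) = 0 := by
  have hcont : Continuous fun t => P.eval (uc t) * uc (-j * t) * FHwReg α β t := by
    have := continuous_FHwReg β hα
    fun_prop
  have hFTC := intervalIntegral.integral_eq_sub_of_hasDerivAt_of_le Real.two_pi_pos.le
    hcont.continuousOn
    (fun θ hθ => hasDerivAt_ladder_primitive β P j
      (Real.sin_pos_of_pos_of_lt_pi (by linarith [hθ.1]) (by linarith [hθ.2])).ne')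
    ((intervalIntegrable_eval_mul_conj_eval_mul (intervalIntegrable_FHw β hα) _ _).const_mul I)
  rw [FHwReg_two_pi β hα, FHwReg_zero β hα, mul_zero, mul_zero, sub_zero,
    intervalIntegral.integral_const_mul] at hFTC
  rw [circleForm_apply]
  exact (mul_eq_zero.1 hFTC).resolve_left I_ne_zero

end FisherHartwig

theorem FH_r_recurrence (α β : ℝ) (hα : -(1/2 : ℝ) < α)
    (φ : ℕ → Polynomial ℂ) (hφ : OPS (FHw α β) φ) (n : ℕ) :
    ((α : ℂ) + (β : ℂ) * Complex.I + (n : ℂ) + 1) * kC φ n * (φ (n+1)).coeff 0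
      = ((α : ℂ) - (β : ℂ) * Complex.I + (n : ℂ)) * kC φ (n+1) * (φ n).coeff 0 ∧
    rC φ (n+1) * ((α : ℂ) + (β : ℂ) * Complex.I + (n : ℂ) + 1)
      = rC φ n * ((α : ℂ) - (β : ℂ) * Complex.I + (n : ℂ)) := by
  obtain ⟨hdeg, -, hON⟩ := hφ
  have hrec := leadingCoeff_mul_coeff_zero_succ_eq_of_ladderOp
    (B := circleForm (FHw α β) (intervalIntegrable_FHw β hα)) hdeg hON (circleForm_X_mul_X _ _)
    (circleForm_FHw_ladderOp β hα) n
  refine ⟨hrec, ?_⟩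
  unfold rC kC
  rw [div_mul_eq_mul_div, div_mul_eq_mul_div,
    div_eq_div_iff (leadingCoeff_ne_zero_of_degree_eq (hdeg _))
      (leadingCoeff_ne_zero_of_degree_eq (hdeg _))]
  linear_combination hrec
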